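/- arXiv:2407.05072 — 5 statements merged into one kernel-verified Lean document; each statement's English description precedes it below -/
import Mathlib

section
/- Let Q be a commutative ring, d ≥ 2 an integer, ζ ∈ Q an element satisfying ∏_{i=0}^{d-1}(t − ζ^i) = t^d − 1 in the polynomial ring Q[t], and f, g ∈ Q. If X is a d-fold matrix factorization of f of rank n and Y is a d-fold matrix factorization of g of rank m, then X ⊗_ζ Y is a d-fold matrix factorization of f + g of rank dnm; that is, for every k ∈ ℤ/d the cyclic product Φ_k Φ_{k+1} ⋯ Φ_{k+d-1} equals (f+g)·I_{dnm}. -/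
/-!
Index the blocks of a family `θ : ZMod d → Matrix ι ι Q` by `ι × ZMod d` and form the single
matrix `blockDiagonal θ * cyclicShift`, which carries `θ k` in block position `(k, k + 1)`. Its
`d`-th power is block diagonal with the cyclic products of `θ` as blocks, so `θ` is a `d`-fold
matrix factorization of `F` iff that power is `F • 1`.

After reindexing, `(X ⊗_ζ Y)_k = B k + A`, where `B k` is block diagonal with blocks
`ζ ^ j • (1 ⊗ ψ_{k - j})` and `A` carries `φ_{j + 1} ⊗ 1` in position `(j, j + 1)`. Since
`A * B (k + 1) = ζ • (B k * A)`, the single matrices `a`, `b` attached to `A` and `B` satisfy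
`a * b = ζ • (b * a)`, and then `(a + b) ^ d = ∑ [d choose i]_ζ • b ^ i * a ^ (d - i)`.
Comparing coefficients in the `ζ`-binomial expansion of `∏ i < d, (t - ζ ^ i) = t ^ d - 1`
shows that the Gaussian binomials `[d choose i]_ζ` vanish for `0 < i < d`, so
`(a + b) ^ d = a ^ d + b ^ d = (f + g) • 1`.
-/

open Matrix Polynomial
open scoped Kronecker

namespace MF

variable {Q : Type*} [CommRing Q]

/-- The cyclic product `φ_k * φ_{k+1} * ⋯ * φ_{k+d-1}`. -/
def cycProd {d : ℕ} {ι : Type*} [Fintype ι] [DecidableEq ι]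
    (φ : ZMod d → Matrix ι ι Q) (k : ZMod d) : Matrix ι ι Q :=
  (List.ofFn (fun i : Fin d => φ (k + ((i : ℕ) : ZMod d)))).prod

/-- `φ` is a `d`-fold matrix factorization of `f`. -/
def IsMF (d : ℕ) {ι : Type*} [Fintype ι] [DecidableEq ι] (f : Q)
    (φ : ZMod d → Matrix ι ι Q) : Prop :=
  ∀ k : ZMod d, cycProd φ k = f • (1 : Matrix ι ι Q)

/-- The `i`-fold shift `T^i X`, given by `(T^i X)_k = φ_{k+i}`. -/
def shift {d : ℕ} {ι : Type*} (i : ZMod d) (φ : ZMod d → Matrix ι ι Q) :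
    ZMod d → Matrix ι ι Q :=
  fun k => φ (k + i)

/-- The tensor product `X ⊗_ζ Y` of matrix factorizations. -/
def tensor {d n m : ℕ} (ζ : Q) (φ : ZMod d → Matrix (Fin n) (Fin n) Q)
    (ψ : ZMod d → Matrix (Fin m) (Fin m) Q) :
    ZMod d → Matrix (Fin d × Fin n × Fin m) (Fin d × Fin n × Fin m) Q :=
  fun k => Matrix.of fun p q =>
    (if q.1 = p.1 then
        ζ ^ (p.1 : ℕ) • ((1 : Matrix (Fin n) (Fin n) Q) ⊗ₖ ψ (k - ((p.1 : ℕ) : ZMod d)))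
      else if ((q.1 : ℕ) : ZMod d) = ((p.1 : ℕ) : ZMod d) + 1 then
        φ (((p.1 : ℕ) : ZMod d) + 1) ⊗ₖ (1 : Matrix (Fin m) (Fin m) Q)
      else (0 : Matrix (Fin n × Fin m) (Fin n × Fin m) Q)) p.2 q.2

/-- Isomorphism of `d`-fold matrix factorizations. -/
def Iso {d : ℕ} {ι κ : Type*} [Fintype ι] [Fintype κ] [DecidableEq ι] [DecidableEq κ]
    (Φ : ZMod d → Matrix ι ι Q) (Ψ : ZMod d → Matrix κ κ Q) : Prop :=
  ∃ (α : ZMod d → Matrix κ ι Q) (β : ZMod d → Matrix ι κ Q),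
    (∀ k, α k * β k = 1) ∧ (∀ k, β k * α k = 1) ∧
    (∀ k, α (k - 1) * Φ k = Ψ k * α k)

/-- Direct sum of matrix factorizations. -/
def dsum {d : ℕ} {ι κ : Type*} (φ : ZMod d → Matrix ι ι Q) (ψ : ZMod d → Matrix κ κ Q) :
    ZMod d → Matrix (ι ⊕ κ) (ι ⊕ κ) Q :=
  fun k => Matrix.fromBlocks (φ k) 0 0 (ψ k)

/-- Direct sum of a finite family of matrix factorizations with the same underlying size. -/
def dsumFam {d t : ℕ} {ι : Type*} (Z : Fin t → (ZMod d → Matrix ι ι Q)) :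
    ZMod d → Matrix (Fin t × ι) (Fin t × ι) Q :=
  fun k => Matrix.of fun p q => if p.1 = q.1 then Z p.1 k p.2 q.2 else 0

/-- A matrix factorization (of positive rank) is indecomposable if it is not isomorphic to a
direct sum of two matrix factorizations of positive rank. -/
def Indecomposable (d : ℕ) {ι : Type*} [Fintype ι] [DecidableEq ι] (f : Q)
    (φ : ZMod d → Matrix ι ι Q) : Prop :=
  Nonempty ι ∧
    ¬ ∃ (n₁ n₂ : ℕ) (ψ₁ : ZMod d → Matrix (Fin n₁) (Fin n₁) Q)
        (ψ₂ : ZMod d → Matrix (Fin n₂) (Fin n₂) Q),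
        0 < n₁ ∧ 0 < n₂ ∧ IsMF d f ψ₁ ∧ IsMF d f ψ₂ ∧ Iso φ (dsum ψ₁ ψ₂)

/-- A matrix factorization over a local ring is reduced if all entries of its matrices lie in
the maximal ideal. -/
def Reduced [IsLocalRing Q] {d : ℕ} {ι : Type*} (φ : ZMod d → Matrix ι ι Q) : Prop :=
  ∀ (k : ZMod d) (p q : ι), φ k p q ∈ IsLocalRing.maximalIdeal Q

/-- A matrix factorization over a local `K`-algebra with residue field `K` is strongly
indecomposable (Definition 5.1). -/
def StronglyIndec (K : Type*) [Field K] [Algebra K Q] [IsLocalRing Q]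
    {d : ℕ} {ι : Type*} [Fintype ι] [DecidableEq ι]
    (φ : ZMod d → Matrix ι ι Q) : Prop :=
  (∀ j l : ZMod d, j ≠ l → ∀ α β : Matrix ι ι Q,
      α * φ j = φ l * β →
      (∀ p q, α p q ∈ IsLocalRing.maximalIdeal Q) ∧
      (∀ p q, β p q ∈ IsLocalRing.maximalIdeal Q)) ∧
  (∀ (l : ZMod d) (α β : Matrix ι ι Q),
      α * φ l = φ l * β →
      ∃ ξ : K, (∀ p q, (α - algebraMap K Q ξ • (1 : Matrix ι ι Q)) p q ∈
                  IsLocalRing.maximalIdeal Q) ∧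
               (∀ p q, (β - algebraMap K Q ξ • (1 : Matrix ι ι Q)) p q ∈
                  IsLocalRing.maximalIdeal Q))

end MF

open Finset

namespace MF

section QBinomial

variable {Q : Type*} [CommRing Q]

/-- `qBinom ζ i j` is the Gaussian binomial coefficient `[i + j choose i]` at `q = ζ`. -/
def qBinom (ζ : Q) : ℕ → ℕ → Q
  | 0, _ => 1
  | _ + 1, 0 => 1
  | i + 1, j + 1 => qBinom ζ (i + 1) j + ζ ^ (j + 1) * qBinom ζ i (j + 1)

@[simp]
theorem qBinom_zero_right (ζ : Q) (i : ℕ) : qBinom ζ i 0 = 1 := by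
  cases i <;> rw [qBinom]

@[simp]
theorem qBinom_zero_left (ζ : Q) (j : ℕ) : qBinom ζ 0 j = 1 := by
  rw [qBinom]

theorem sum_antidiagonal_succ_qBinom_smul {M : Type*} [AddCommMonoid M] [Module Q M] (ζ : Q)
    (x : ℕ → ℕ → M) (r : ℕ) :
    ∑ p ∈ antidiagonal (r + 1), qBinom ζ p.1 p.2 • x p.1 p.2 =
      ∑ p ∈ antidiagonal r, qBinom ζ p.1 p.2 • x p.1 (p.2 + 1) +
        ∑ p ∈ antidiagonal r, (ζ ^ p.2 * qBinom ζ p.1 p.2) • x (p.1 + 1) p.2 := by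
  let f : ℕ × ℕ → M := fun p => if p.2 = 0 then 0 else qBinom ζ p.1 (p.2 - 1) • x p.1 p.2
  let g : ℕ × ℕ → M := fun p =>
    if p.1 = 0 then 0 else (ζ ^ p.2 * qBinom ζ (p.1 - 1) p.2) • x p.1 p.2
  have pascal : ∀ p ∈ antidiagonal (r + 1), qBinom ζ p.1 p.2 • x p.1 p.2 = f p + g p := by
    rintro ⟨_ | i, _ | j⟩ hp
    · simp at hp
    · simp [f, g]
    · simp [f, g]
    · simp [f, g, qBinom, add_smul]
  rw [sum_congr rfl pascal, sum_add_distrib, Nat.sum_antidiagonal_succ', Nat.sum_antidiagonal_succ]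
  simp [f, g]

theorem pow_mul_eq_smul_mul_pow {R : Type*} [Ring R] [Algebra Q R] {ζ : Q} {a b : R}
    (h : a * b = ζ • (b * a)) (t : ℕ) : a ^ t * b = ζ ^ t • (b * a ^ t) := by
  induction t with
  | zero => simp
  | succ t ih =>
    rw [pow_succ, mul_assoc, h, mul_smul_comm, ← mul_assoc, ih, smul_mul_assoc, smul_smul,
      mul_assoc, ← pow_succ, ← pow_succ']

theorem add_pow_of_mul_eq_smul_mul {R : Type*} [Ring R] [Algebra Q R] {ζ : Q} {a b : R}
    (h : a * b = ζ • (b * a)) (r : ℕ) :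
    (a + b) ^ r = ∑ p ∈ antidiagonal r, qBinom ζ p.1 p.2 • (b ^ p.1 * a ^ p.2) := by
  induction r with
  | zero => simp
  | succ r ih =>
    rw [sum_antidiagonal_succ_qBinom_smul ζ fun i j => b ^ i * a ^ j, pow_succ, ih, sum_mul,
      ← sum_add_distrib]
    refine sum_congr rfl fun p _ => ?_
    rw [smul_mul_assoc, mul_add, mul_assoc, mul_assoc, pow_mul_eq_smul_mul_pow h, mul_smul_comm,
      smul_add, smul_smul, ← pow_succ, ← mul_assoc (b ^ p.1), ← pow_succ,
      mul_comm (qBinom ζ _ _)]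

theorem prod_X_sub_C_pow_eq_sum (ζ : Q) (r : ℕ) :
    ∏ i ∈ range r, (X - C (ζ ^ i)) =
      ∑ p ∈ antidiagonal r,
        qBinom ζ p.1 p.2 • (C ((-1) ^ p.1 * ζ ^ p.1.choose 2) * X ^ p.2) := by
  induction r with
  | zero => simp
  | succ r ih =>
    rw [sum_antidiagonal_succ_qBinom_smul ζ fun i j => C ((-1) ^ i * ζ ^ i.choose 2) * X ^ j,
      prod_range_succ, ih, sum_mul, ← sum_add_distrib]
    refine sum_congr rfl fun p hp => ?_
    rw [HasAntidiagonal.mem_antidiagonal] at hp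
    rw [← hp, Nat.choose_succ_succ', Nat.choose_one_right]
    simp only [smul_eq_C_mul, C_mul, C_pow, C_neg, C_1]
    ring

variable {d : ℕ} {ζ : Q}

theorem pow_eq_one_of_prod_X_sub_C (hd : 2 ≤ d)
    (hζ : ∏ i ∈ range d, (X - C (ζ ^ i)) = X ^ d - 1) : ζ ^ d = 1 := by
  have h := congrArg (eval ζ) hζ
  rw [eval_prod, prod_eq_zero (mem_range.mpr hd) (by simp)] at h
  simp only [eval_sub, eval_pow, eval_X, eval_one] at h
  exact sub_eq_zero.mp h.symm

theorem qBinom_eq_zero_of_prod_X_sub_C (hd : 2 ≤ d)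
    (hζ : ∏ i ∈ range d, (X - C (ζ ^ i)) = X ^ d - 1) {i j : ℕ} (hi : 0 < i) (hj : 0 < j)
    (hij : i + j = d) : qBinom ζ i j = 0 := by
  have hcoeff := congrArg (coeff · j) ((prod_X_sub_C_pow_eq_sum ζ d).symm.trans hζ)
  simp only [finsetSum_coeff, coeff_smul, coeff_C_mul_X_pow, smul_eq_mul] at hcoeff
  rw [sum_eq_single (i, j) (fun p hp hne => ?_) (fun h => (h (by simpa using hij)).elim)] at hcoeff
  · have hunit : IsUnit ((-1 : Q) ^ i * ζ ^ i.choose 2) :=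
      (isUnit_one.neg.pow i).mul ((IsUnit.of_pow_eq_one (pow_eq_one_of_prod_X_sub_C hd hζ)
        (by omega)).pow _)
    rw [if_pos rfl, coeff_sub, coeff_X_pow, coeff_one, if_neg (by omega), if_neg hj.ne',
      sub_zero] at hcoeff
    exact hunit.mul_left_eq_zero.mp hcoeff
  · rw [HasAntidiagonal.mem_antidiagonal] at hp
    rw [if_neg fun h => hne (Prod.ext (by omega) h.symm), mul_zero]

theorem add_pow_eq_of_mul_eq_smul_mul {R : Type*} [Ring R] [Algebra Q R] (hd : 2 ≤ d)
    (hζ : ∏ i ∈ range d, (X - C (ζ ^ i)) = X ^ d - 1) {a b : R} (h : a * b = ζ • (b * a)) :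
    (a + b) ^ d = a ^ d + b ^ d := by
  obtain ⟨e, rfl⟩ : ∃ e, d = e + 2 := ⟨d - 2, by omega⟩
  rw [add_pow_of_mul_eq_smul_mul h, Nat.sum_antidiagonal_succ, Nat.sum_antidiagonal_succ',
    sum_eq_zero fun p hp => ?_]
  · simp only [qBinom_zero_left, qBinom_zero_right, one_smul, pow_zero, mul_one, one_mul,
      add_zero]
  · rw [qBinom_eq_zero_of_prod_X_sub_C hd hζ (by omega) (by omega)
      (by rw [HasAntidiagonal.mem_antidiagonal] at hp; omega), zero_smul]

end QBinomial

section CyclicShift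

variable {Q : Type*} [CommRing Q] {d : ℕ} [NeZero d] {ι : Type*} [Fintype ι] [DecidableEq ι]

def cyclicShift : Matrix (ι × ZMod d) (ι × ZMod d) Q :=
  Equiv.Perm.permMatrix Q (Equiv.prodCongr (Equiv.refl ι) (Equiv.addRight 1))

theorem cyclicShift_mul_blockDiagonal (δ : ZMod d → Matrix ι ι Q) :
    cyclicShift * blockDiagonal δ = blockDiagonal (fun k => δ (k + 1)) * cyclicShift := by
  ext ⟨i, x⟩ ⟨j, y⟩
  simp [cyclicShift, Equiv.Perm.permMatrix, PEquiv.toMatrix_toPEquiv_mul,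
    PEquiv.mul_toMatrix_toPEquiv, blockDiagonal_apply, eq_add_neg_iff_add_eq]

theorem cyclicShift_pow_card : (cyclicShift : Matrix (ι × ZMod d) (ι × ZMod d) Q) ^ d = 1 := by
  have hσ : (Equiv.prodCongr (Equiv.refl ι) (Equiv.addRight (1 : ZMod d))) ^ d = 1 := by
    ext ⟨i, x⟩ <;> simp [Equiv.Perm.coe_pow]
  rw [cyclicShift, ← inv_inv (Equiv.prodCongr _ _), ← permMatrixHom_apply, ← map_pow,
    inv_pow, hσ, inv_one, map_one]

theorem blockDiagonal_mul_cyclicShift_pow (θ : ZMod d → Matrix ι ι Q) (r : ℕ) :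
    (blockDiagonal θ * cyclicShift) ^ r =
      blockDiagonal (fun k => (List.ofFn fun t : Fin r => θ (k + ((t : ℕ) : ZMod d))).prod) *
        cyclicShift ^ r := by
  induction r with
  | zero =>
    simp only [pow_zero, mul_one, List.ofFn_zero, List.prod_nil]
    exact blockDiagonal_one.symm
  | succ r ih =>
    rw [pow_succ', ih, mul_assoc, ← mul_assoc cyclicShift, cyclicShift_mul_blockDiagonal,
      mul_assoc, ← mul_assoc (blockDiagonal θ), ← blockDiagonal_mul, ← pow_succ']
    congr
    funext k
    rw [List.ofFn_succ, List.prod_cons]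
    simp only [Fin.val_zero, Fin.val_succ, Nat.cast_zero, Nat.cast_succ, add_zero]
    ring_nf

theorem isMF_iff_blockDiagonal_mul_cyclicShift_pow {F : Q} {θ : ZMod d → Matrix ι ι Q} :
    IsMF d F θ ↔ (blockDiagonal θ * cyclicShift) ^ d = F • 1 := by
  rw [blockDiagonal_mul_cyclicShift_pow, cyclicShift_pow_card, mul_one, ← blockDiagonal_one,
    ← blockDiagonal_smul, blockDiagonal_inj, funext_iff]
  rfl

theorem blockDiagonal_mul_cyclicShift_mul (θ₁ θ₂ : ZMod d → Matrix ι ι Q) :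
    blockDiagonal θ₁ * cyclicShift * (blockDiagonal θ₂ * cyclicShift) =
      blockDiagonal (fun k => θ₁ k * θ₂ (k + 1)) * (cyclicShift * cyclicShift) := by
  rw [mul_assoc, ← mul_assoc cyclicShift, cyclicShift_mul_blockDiagonal, mul_assoc,
    ← mul_assoc, ← blockDiagonal_mul]

end CyclicShift

section Closure

variable {Q : Type*} [CommRing Q] {d : ℕ} {ι κ : Type*} [Fintype ι] [DecidableEq ι]
  [Fintype κ] [DecidableEq κ] {F : Q} {θ : ZMod d → Matrix ι ι Q}

theorem IsMF.reindex (e : ι ≃ κ) (h : IsMF d F θ) : IsMF d F (fun k => reindex e e (θ k)) :=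
  fun k => by
    have := congrArg (reindexAlgEquiv Q Q e) (h k)
    rwa [cycProd, map_list_prod, List.map_ofFn, map_smul, map_one] at this

theorem IsMF.blockDiagonal {o : Type*} [Fintype o] [DecidableEq o]
    {θ : ZMod d → o → Matrix ι ι Q} (h : ∀ j, IsMF d F (fun k => θ k j)) :
    IsMF d F (fun k => blockDiagonal (θ k)) := fun k => by
  have hblocks : (List.ofFn fun t : Fin d => θ (k + t)).prod = F • 1 :=
    funext fun j => by rw [Pi.list_prod_apply, List.map_ofFn]; exact h j k
  calc cycProd (fun k => Matrix.blockDiagonal (θ k)) k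
      = blockDiagonalRingHom ι o Q (List.ofFn fun t : Fin d => θ (k + t)).prod := by
        rw [map_list_prod, List.map_ofFn]; rfl
    _ = F • 1 := by
        rw [hblocks, blockDiagonalRingHom_apply, blockDiagonal_smul, blockDiagonal_one]

theorem IsMF.kronecker_one (h : IsMF d F θ) :
    IsMF d F (fun k => θ k ⊗ₖ (1 : Matrix κ κ Q)) := by
  simpa only [Matrix.kronecker_one] using IsMF.blockDiagonal (o := κ) fun _ => h

theorem IsMF.one_kronecker (h : IsMF d F θ) :
    IsMF d F (fun k => (1 : Matrix κ κ Q) ⊗ₖ θ k) := by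
  simpa only [Matrix.one_kronecker] using
    (IsMF.blockDiagonal (o := κ) fun _ => h).reindex (Equiv.prodComm _ _)

theorem prod_ofFn_smul {A : Type*} [Ring A] [Algebra Q A] (c : Q) {r : ℕ} (M : Fin r → A) :
    (List.ofFn fun t => c • M t).prod = c ^ r • (List.ofFn M).prod := by
  induction r with
  | zero => simp
  | succ r ih => rw [List.ofFn_succ, List.ofFn_succ, List.prod_cons, List.prod_cons, ih,
      smul_mul_smul_comm, ← pow_succ']

theorem IsMF.smul (c : Q) (h : IsMF d F θ) : IsMF d (c ^ d * F) (fun k => c • θ k) :=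
  fun k => by rw [cycProd, prod_ofFn_smul, ← cycProd, h k, smul_smul]

theorem IsMF.shift (i : ZMod d) (h : IsMF d F θ) : IsMF d F (shift i θ) := fun k => by
  rw [← h (k + i)]
  unfold cycProd MF.shift
  simp only [add_right_comm]

theorem isMF_const_iff {A : Matrix ι ι Q} : IsMF d F (fun _ => A) ↔ A ^ d = F • 1 := by
  simp [IsMF, cycProd, List.ofFn_const, List.prod_replicate]

end Closure


theorem IsMF.add_of_mul_eq_smul_mul {Q : Type*} [CommRing Q] {d : ℕ} {ι : Type*} [Fintype ι]
    [DecidableEq ι] (hd : 2 ≤ d) {ζ : Q}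
    (hζ : ∏ i ∈ range d, (X - C (ζ ^ i)) = X ^ d - 1) {f g : Q} {A : Matrix ι ι Q}
    {B : ZMod d → Matrix ι ι Q} (hA : A ^ d = f • 1) (hB : IsMF d g B)
    (hAB : ∀ k, A * B (k + 1) = ζ • (B k * A)) : IsMF d (f + g) (fun k => B k + A) := by
  have : NeZero d := ⟨by omega⟩
  set a := Matrix.blockDiagonal (fun _ : ZMod d => A) * cyclicShift
  set b := Matrix.blockDiagonal B * cyclicShift
  have hab : a * b = ζ • (b * a) := by
    rw [blockDiagonal_mul_cyclicShift_mul, blockDiagonal_mul_cyclicShift_mul, ← smul_mul_assoc,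
      ← blockDiagonal_smul]
    exact congrArg (Matrix.blockDiagonal · * _) (funext hAB)
  have ha : a ^ d = f • 1 :=
    isMF_iff_blockDiagonal_mul_cyclicShift_pow.mp (isMF_const_iff.mpr hA)
  have hb : b ^ d = g • 1 := isMF_iff_blockDiagonal_mul_cyclicShift_pow.mp hB
  rw [isMF_iff_blockDiagonal_mul_cyclicShift_pow,
    show (fun k => B k + A) = B + fun _ => A from rfl, blockDiagonal_add, add_mul, add_comm,
    add_pow_eq_of_mul_eq_smul_mul hd hζ hab, ha, hb, add_smul]

section Tensor

variable {Q : Type*} [CommRing Q] {d : ℕ} [NeZero d] {ι κ : Type*} [Fintype ι] [DecidableEq ι]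
  [Fintype κ] [DecidableEq κ]

theorem pow_val_add_one {ζ : Q} (hζ : ζ ^ d = 1) (j : ZMod d) :
    ζ ^ (j + 1).val = ζ * ζ ^ j.val := by
  rw [ZMod.val_add, ← pow_eq_pow_mod _ hζ, pow_add, ZMod.val_one_eq_one_mod,
    ← pow_eq_pow_mod _ hζ, pow_one, mul_comm]

def tensorDiag (ι : Type*) [DecidableEq ι] (ζ : Q) (ψ : ZMod d → Matrix κ κ Q)
    (k : ZMod d) : ZMod d → Matrix (ι × κ) (ι × κ) Q :=
  fun j => ζ ^ j.val • ((1 : Matrix ι ι Q) ⊗ₖ ψ (k - j))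

def tensorOffDiag (κ : Type*) [DecidableEq κ] (φ : ZMod d → Matrix ι ι Q) :
    ZMod d → Matrix (ι × κ) (ι × κ) Q :=
  fun j => φ (j + 1) ⊗ₖ (1 : Matrix κ κ Q)

theorem isMF_tensorDiag {ζ g : Q} (hζ : ζ ^ d = 1) {ψ : ZMod d → Matrix κ κ Q}
    (hψ : IsMF d g ψ) : IsMF d g (fun k => blockDiagonal (tensorDiag ι ζ ψ k)) :=
  IsMF.blockDiagonal fun j => by
    have := ((hψ.shift (-j)).one_kronecker (κ := ι)).smul (ζ ^ j.val)
    rw [← pow_mul, mul_comm j.val, pow_mul, hζ, one_pow, one_mul] at this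
    simpa only [tensorDiag, MF.shift, sub_eq_add_neg] using this

theorem tensorOffDiag_mul_cyclicShift_pow {f : Q} {φ : ZMod d → Matrix ι ι Q}
    (hφ : IsMF d f φ) :
    (blockDiagonal (tensorOffDiag κ φ) * cyclicShift) ^ d = f • 1 :=
  isMF_iff_blockDiagonal_mul_cyclicShift_pow.mp (hφ.shift 1).kronecker_one

theorem tensorOffDiag_mul_tensorDiag {ζ : Q} (hζ : ζ ^ d = 1) (φ : ZMod d → Matrix ι ι Q)
    (ψ : ZMod d → Matrix κ κ Q) (k : ZMod d) :
    blockDiagonal (tensorOffDiag κ φ) * cyclicShift *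
        blockDiagonal (tensorDiag ι ζ ψ (k + 1)) =
      ζ • (blockDiagonal (tensorDiag ι ζ ψ k) *
        (blockDiagonal (tensorOffDiag κ φ) * cyclicShift)) := by
  rw [mul_assoc, cyclicShift_mul_blockDiagonal, ← mul_assoc, ← blockDiagonal_mul, ← mul_assoc,
    ← blockDiagonal_mul, ← smul_mul_assoc, ← blockDiagonal_smul]
  congr 2
  funext j
  simp only [tensorDiag, tensorOffDiag, Pi.smul_apply, mul_smul_comm, smul_mul_assoc, smul_smul,
    ← mul_kronecker_mul, mul_one, one_mul, add_sub_add_right_eq_sub, pow_val_add_one hζ]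

def finEquivZMod (d : ℕ) [NeZero d] : Fin d ≃ ZMod d where
  toFun i := (i : ℕ)
  invFun z := ⟨z.val, z.val_lt⟩
  left_inv i := Fin.ext (ZMod.val_cast_of_lt i.isLt)
  right_inv := ZMod.natCast_zmod_val

def blockIndexEquiv (d : ℕ) [NeZero d] (κ : Type*) : Fin d × κ ≃ κ × ZMod d :=
  (Equiv.prodComm _ _).trans ((Equiv.refl κ).prodCongr (finEquivZMod d))

theorem tensor_eq_reindex [Fact (1 < d)] {n m : ℕ} (ζ : Q)
    (φ : ZMod d → Matrix (Fin n) (Fin n) Q) (ψ : ZMod d → Matrix (Fin m) (Fin m) Q) :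
    tensor ζ φ ψ = fun k =>
      reindex (blockIndexEquiv d _).symm (blockIndexEquiv d _).symm
        (blockDiagonal (tensorDiag (Fin n) ζ ψ k) +
          blockDiagonal (tensorOffDiag (Fin m) φ) * cyclicShift) := by
  ext k ⟨i, x⟩ ⟨j, y⟩
  by_cases hij : i = j
  · subst hij
    have hne : ((i : ℕ) : ZMod d) ≠ (i : ℕ) + -1 := by simp
    simp [tensor, tensorDiag, cyclicShift, blockDiagonal_apply, blockIndexEquiv, finEquivZMod,
      PEquiv.mul_toMatrix_toPEquiv, hne, Nat.mod_eq_of_lt i.isLt]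
  · have hcast : ((i : ℕ) : ZMod d) = (j : ℕ) ↔ i = j := (finEquivZMod d).injective.eq_iff
    simp [tensor, tensorOffDiag, cyclicShift, blockDiagonal_apply, blockIndexEquiv, finEquivZMod,
      PEquiv.mul_toMatrix_toPEquiv, hcast, hij, eq_add_neg_iff_add_eq, eq_comm]
    split_ifs <;> rfl

end Tensor

end MF

/-- the tensor product of a matrix factorization of `f` and one of `g` is a
matrix factorization of `f + g`. -/
theorem tensor_isMF {Q : Type*} [CommRing Q] (d : ℕ) (hd : 2 ≤ d) (ζ : Q)
    (hζ : ∏ i ∈ Finset.range d, (Polynomial.X - Polynomial.C (ζ ^ i)) =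
      Polynomial.X ^ d - 1)
    (f g : Q) (n m : ℕ)
    (φ : ZMod d → Matrix (Fin n) (Fin n) Q) (hφ : MF.IsMF d f φ)
    (ψ : ZMod d → Matrix (Fin m) (Fin m) Q) (hψ : MF.IsMF d g ψ) :
    MF.IsMF d (f + g) (MF.tensor ζ φ ψ) := by
  have : Fact (1 < d) := ⟨hd⟩
  have hζd : ζ ^ d = 1 := MF.pow_eq_one_of_prod_X_sub_C hd hζ
  have hsum := MF.IsMF.add_of_mul_eq_smul_mul hd hζ
    (MF.tensorOffDiag_mul_cyclicShift_pow (κ := Fin m) hφ)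
    (MF.isMF_tensorDiag (ι := Fin n) hζd hψ)
    (MF.tensorOffDiag_mul_tensorDiag hζd φ ψ)
  rw [MF.tensor_eq_reindex]
  exact hsum.reindex _
end

section
/- Let Q be a commutative ring, d ≥ 2, ζ ∈ Q with ∏_{i=0}^{d-1}(t − ζ^i) = t^d − 1 in Q[t], and f, g ∈ Q. For any d-fold matrix factorization X of f and any d-fold matrix factorization Y of g: (i) TX ⊗_ζ Y ≅ T(X ⊗_ζ Y), and T(X ⊗_ζ Y) = X ⊗_ζ TY as tuples of matrices; (ii) for every i ∈ ℤ/d, T^iX ⊗_ζ T^{-i}Y ≅ X ⊗_ζ Y. -/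
open Matrix Polynomial
open scoped Kronecker

/-! `TX ⊗_ζ Y ≅ X ⊗_ζ TY` by a monomial isomorphism: in degree `k` it sends block `i` to
block `i - 1` scaled by `ζ ^ (i - k)`, the exponent read in `ZMod d`. That is legitimate because
`ζ ^ d = 1` (evaluate the factorisation of `t ^ d - 1` at `t = ζ`), so `i ↦ ζ ^ i` is an additive
character of `ZMod d`, and the intertwining relation reduces to `ζ ^ (i - k + 1) ζ ^ (i - 1) =
ζ ^ i ζ ^ (i - k)` on diagonal blocks. Since `T (X ⊗_ζ Y) = X ⊗_ζ TY` holds on the nose, this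
gives (i), and iterating `T^(t+1) X ⊗ T^-(t+1) Y ≅ T^t X ⊗ T^-t Y` gives (ii). -/

theorem pow_eq_one_of_prod_X_sub_C_eq {Q : Type*} [CommRing Q] {d : ℕ} {ζ : Q} (hd : 1 < d)
    (h : ∏ i ∈ Finset.range d, (X - C (ζ ^ i)) = X ^ d - 1) : ζ ^ d = 1 := by
  have := congrArg (eval ζ) h
  rw [eval_prod, Finset.prod_eq_zero (Finset.mem_range.mpr hd) (by simp), eval_sub, eval_pow,
    eval_X, eval_one] at this
  exact sub_eq_zero.mp this.symm

namespace MF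

variable {Q : Type*} {d : ℕ}

theorem shift_zero {ι : Type*} (φ : ZMod d → Matrix ι ι Q) : shift 0 φ = φ :=
  funext fun k => congrArg φ (add_zero k)

theorem shift_shift {ι : Type*} (i j : ZMod d) (φ : ZMod d → Matrix ι ι Q) :
    shift i (shift j φ) = shift (i + j) φ :=
  funext fun k => congrArg φ (add_assoc k i j)

variable [CommRing Q]

theorem shift_one_tensor {n m : ℕ} (ζ : Q) (φ : ZMod d → Matrix (Fin n) (Fin n) Q)
    (ψ : ZMod d → Matrix (Fin m) (Fin m) Q) :
    shift 1 (tensor ζ φ ψ) = tensor ζ φ (shift 1 ψ) := by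
  ext1 k
  simp only [shift, tensor, add_sub_right_comm]

section Iso

variable {ι κ ν : Type*} [Fintype ι] [Fintype κ] [Fintype ν]
  [DecidableEq ι] [DecidableEq κ] [DecidableEq ν]

theorem Iso.refl (Φ : ZMod d → Matrix ι ι Q) : Iso Φ Φ :=
  ⟨fun _ => 1, fun _ => 1, fun _ => mul_one 1, fun _ => mul_one 1,
    fun k => by rw [Matrix.one_mul, Matrix.mul_one]⟩

theorem Iso.trans {Φ : ZMod d → Matrix ι ι Q} {Ψ : ZMod d → Matrix κ κ Q}
    {Θ : ZMod d → Matrix ν ν Q} (h₁ : Iso Φ Ψ) (h₂ : Iso Ψ Θ) : Iso Φ Θ := by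
  obtain ⟨α, β, hαβ, hβα, hα⟩ := h₁
  obtain ⟨α', β', hαβ', hβα', hα'⟩ := h₂
  refine ⟨fun k => α' k * α k, fun k => β k * β' k, fun k => ?_, fun k => ?_, fun k => ?_⟩
  · rw [Matrix.mul_assoc, ← Matrix.mul_assoc (α k), hαβ, Matrix.one_mul, hαβ']
  · rw [Matrix.mul_assoc, ← Matrix.mul_assoc (β' k), hβα', Matrix.one_mul, hβα]
  · rw [Matrix.mul_assoc, hα, ← Matrix.mul_assoc, hα', Matrix.mul_assoc]

theorem Iso.of_monomial {Φ Ψ : ZMod d → Matrix ι ι Q} (σ : Equiv.Perm ι) {w : ZMod d → ι → Q}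
    (hw : ∀ k p, IsUnit (w k p))
    (h : ∀ k p q, w (k - 1) p * Φ k (σ p) (σ q) = Ψ k p q * w k q) : Iso Φ Ψ := by
  refine ⟨fun k => diagonal (w k) * σ.permMatrix Q,
    fun k => σ⁻¹.permMatrix Q * diagonal (fun p => (((hw k p).unit⁻¹ : Qˣ) : Q)), fun k => ?_,
    fun k => ?_, fun k => ?_⟩
  · rw [Matrix.mul_assoc, ← Matrix.mul_assoc (σ.permMatrix Q), ← permMatrix_mul, inv_mul_cancel,
      permMatrix_one, Matrix.one_mul, diagonal_mul_diagonal]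
    simp [IsUnit.mul_val_inv]
  · rw [Matrix.mul_assoc, ← Matrix.mul_assoc (diagonal _), diagonal_mul_diagonal]
    simp [IsUnit.val_inv_mul, ← permMatrix_mul]
  · ext p q
    have key := h k p (σ.symm q)
    rw [σ.apply_symm_apply] at key
    rw [Matrix.mul_assoc, ← Matrix.mul_assoc (Ψ k), Equiv.Perm.permMatrix,
      PEquiv.toMatrix_toPEquiv_mul, PEquiv.mul_toMatrix_toPEquiv, diagonal_mul, submatrix_apply,
      submatrix_apply, mul_diagonal]
    exact key

end Iso

theorem _root_.ZMod.finEquiv_apply [NeZero d] (i : Fin d) : ZMod.finEquiv d i = (i : ℕ) := by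
  obtain ⟨d, rfl⟩ := Nat.exists_eq_succ_of_ne_zero (NeZero.ne d)
  exact (Fin.cast_val_eq_self i).symm

section Tensor

variable [NeZero d] {n m : ℕ} (ζ : Q) (φ : ZMod d → Matrix (Fin n) (Fin n) Q)
  (ψ : ZMod d → Matrix (Fin m) (Fin m) Q)

local notation "e" => ZMod.finEquiv d

theorem tensor_apply (k : ZMod d) (i j : Fin d) (x y : Fin n × Fin m) :
    tensor ζ φ ψ k (i, x) (j, y) =
      if j = i then ζ ^ (i : ℕ) * (1 ⊗ₖ ψ (k - e i)) x y
      else if j = i + 1 then (φ (e i + 1) ⊗ₖ 1) x y else 0 := by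
  have hsucc : e j = e i + 1 ↔ j = i + 1 := by
    rw [← map_one e, ← map_add, (e).injective.eq_iff]
  simp only [tensor, of_apply, hsucc, ← ZMod.finEquiv_apply,
    apply_ite (fun M : Matrix _ _ Q => M x y), Matrix.smul_apply, smul_eq_mul, Matrix.zero_apply]

theorem tensor_shift_one_left_apply_sub_one (χ : AddChar (ZMod d) Q)
    (hχ : ∀ i : Fin d, χ (e i) = ζ ^ (i : ℕ)) (k : ZMod d) (i j : Fin d) (x y : Fin n × Fin m) :
    χ (e i - (k - 1)) * tensor ζ (shift 1 φ) ψ k (i - 1, x) (j - 1, y) =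
      tensor ζ φ (shift 1 ψ) k (i, x) (j, y) * χ (e j - k) := by
  simp only [tensor_apply, shift, sub_add_cancel, sub_eq_iff_eq_add, ← hχ, map_sub, map_one]
  split_ifs with hdiag hsucc
  · subst j
    have hχ2 : χ (e i - (k - 1)) * χ (e i - 1) = χ (e i) * χ (e i - k) := by
      rw [← AddChar.map_add_eq_mul, ← AddChar.map_add_eq_mul]
      ring_nf
    rw [show k - (e i - 1) = k - e i + 1 by ring]
    linear_combination ((1 : Matrix (Fin n) (Fin n) Q) ⊗ₖ ψ (k - e i + 1)) x y * hχ2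
  · rw [hsucc, map_add, map_one, mul_comm, show e i - (k - 1) = e i + 1 - k by ring]
  · rw [zero_mul, mul_zero]

theorem iso_tensor_shift_one (hζ : ζ ^ d = 1) :
    Iso (tensor ζ (shift 1 φ) ψ) (tensor ζ φ (shift 1 ψ)) := by
  let χ := AddChar.zmodChar d hζ
  have hχ (i : Fin d) : χ (e i) = ζ ^ (i : ℕ) := by
    rw [ZMod.finEquiv_apply, AddChar.zmodChar_apply']
  refine Iso.of_monomial ((Equiv.subRight 1).prodCongr (Equiv.refl _))
    (w := fun k p => χ (e p.1 - k)) (fun k p => χ.val_isUnit _) ?_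
  rintro k ⟨i, x⟩ ⟨j, y⟩
  exact tensor_shift_one_left_apply_sub_one ζ φ ψ χ hχ k i j x y

theorem iso_tensor_shift_shift_neg (hζ : ζ ^ d = 1) (i : ZMod d) :
    Iso (tensor ζ (shift i φ) (shift (-i) ψ)) (tensor ζ φ ψ) := by
  rw [← ZMod.natCast_zmod_val i]
  induction i.val with
  | zero => simpa only [Nat.cast_zero, neg_zero, shift_zero] using Iso.refl _
  | succ t ih =>
    have step := iso_tensor_shift_one ζ (shift (t : ZMod d) φ) (shift (-(t + 1)) ψ) hζ
    rw [shift_shift, shift_shift, show (1 : ZMod d) + -(t + 1) = -t by ring, add_comm] at step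
    push_cast
    exact step.trans ih

end Tensor

end MF

theorem tensor_shift_general {Q : Type*} [CommRing Q] (d : ℕ) (hd : 2 ≤ d) (ζ : Q)
    (hζ : ∏ i ∈ Finset.range d, (Polynomial.X - Polynomial.C (ζ ^ i)) =
      Polynomial.X ^ d - 1)
    (n m : ℕ)
    (φ : ZMod d → Matrix (Fin n) (Fin n) Q)
    (ψ : ZMod d → Matrix (Fin m) (Fin m) Q) :
    (MF.Iso (MF.tensor ζ (MF.shift 1 φ) ψ) (MF.shift 1 (MF.tensor ζ φ ψ)) ∧
      MF.shift 1 (MF.tensor ζ φ ψ) = MF.tensor ζ φ (MF.shift 1 ψ)) ∧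
    (∀ i : ZMod d,
      MF.Iso (MF.tensor ζ (MF.shift i φ) (MF.shift (-i) ψ)) (MF.tensor ζ φ ψ)) := by
  have : NeZero d := ⟨by omega⟩
  have hζd : ζ ^ d = 1 := pow_eq_one_of_prod_X_sub_C_eq hd hζ
  refine ⟨⟨?_, MF.shift_one_tensor ζ φ ψ⟩, MF.iso_tensor_shift_shift_neg ζ φ ψ hζd⟩
  rw [MF.shift_one_tensor]
  exact MF.iso_tensor_shift_one ζ φ ψ hζd

/-- interaction of the tensor product with shifts. -/
theorem tensor_shift {Q : Type*} [CommRing Q] (d : ℕ) (hd : 2 ≤ d) (ζ : Q)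
    (hζ : ∏ i ∈ Finset.range d, (Polynomial.X - Polynomial.C (ζ ^ i)) =
      Polynomial.X ^ d - 1)
    (f g : Q) (n m : ℕ)
    (φ : ZMod d → Matrix (Fin n) (Fin n) Q) (hφ : MF.IsMF d f φ)
    (ψ : ZMod d → Matrix (Fin m) (Fin m) Q) (hψ : MF.IsMF d g ψ) :
    (MF.Iso (MF.tensor ζ (MF.shift 1 φ) ψ) (MF.shift 1 (MF.tensor ζ φ ψ)) ∧
      MF.shift 1 (MF.tensor ζ φ ψ) = MF.tensor ζ φ (MF.shift 1 ψ)) ∧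
    (∀ i : ZMod d,
      MF.Iso (MF.tensor ζ (MF.shift i φ) (MF.shift (-i) ψ)) (MF.tensor ζ φ ψ)) :=
  tensor_shift_general d hd ζ hζ n m φ ψ
end

section
/- Let (Q,𝔪) be a local ring, f ∈ 𝔪 a nonzerodivisor, d ≥ 2, and X = (φ_1,…,φ_{d-1},φ_0) a d-fold matrix factorization of f of rank n. Let e = (e_0,…,e_{d-1}) be an idempotent endomorphism of X, i.e. each e_k is an n×n matrix over Q with e_k² = e_k and e_{k-1}φ_k = φ_k e_k for all k ∈ ℤ/d. Then there exist an integer 0 ≤ r ≤ n and invertible n×n matrices C_k (k ∈ ℤ/d) such that C_k e_k C_k^{-1} = diag(I_r, 0) for every k, and each matrix C_{k-1} φ_k C_k^{-1} is block-diagonal of the form diag(φ'_k, φ''_k) with φ'_k of size r×r and φ''_k of size (n−r)×(n−r). In particular (φ'_1,…,φ'_0) and (φ''_1,…,φ''_0) are d-fold matrix factorizations of f of ranks r and n−r, and X is isomorphic to their direct sum. -/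
open Matrix Polynomial
open scoped Kronecker

/-!
Over a local ring the image and kernel of an idempotent matrix are finitely generated
projective, hence free, so each `e k` is conjugate to `diag(1_{r_k}, 0)`. Since `f` is a
nonzerodivisor, so is every `det (φ k)`, and the relation `e (k-1) * φ k = φ k * e k` gives
`r_k ≤ r_{k-1}`; going once around `ZMod d` forces all `r_k` to be equal. Written in these
adapted bases, the `φ k` commute with `diag(1, 0)`, hence are block diagonal, and the result is
isomorphic to the original factorization, so its diagonal blocks again multiply cyclically to `f`.
-/

open Module

namespace LinearMap.IsIdempotentElem

variable {R M : Type*} [Ring R] [AddCommGroup M] [Module R M]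

theorem conj_prodEquivOfIsCompl {p : Module.End R M} (hp : IsIdempotentElem p) :
    ((range p).prodEquivOfIsCompl _ (isCompl hp)).symm.toLinearMap ∘ₗ p ∘ₗ
      ((range p).prodEquivOfIsCompl _ (isCompl hp)).toLinearMap = prodMap id 0 := by
  apply prod_ext <;> ext x : 1
  · have hx : p x = x := (mem_range_iff hp).mp x.2
    simp [hx]
  · simp [mem_ker.mp x.2]

end LinearMap.IsIdempotentElem

section LocalRing

variable {Q : Type*} [CommRing Q] [IsLocalRing Q]

theorem Submodule.finite_free_of_isCompl_of_isLocalRing {M : Type*} [AddCommGroup M]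
    [Module Q M] [Module.Finite Q M] [Module.Projective Q M] {U W : Submodule Q M}
    (h : IsCompl U W) : Module.Finite Q U ∧ Module.Free Q U := by
  have : Module.Finite Q U := .of_surjective _ (projectionOnto_surjective h)
  have : Module.Projective Q U := .of_split U.subtype (U.projectionOnto W h) (by ext; simp)
  exact ⟨inferInstance, Module.free_of_flat_of_isLocalRing⟩

theorem Matrix.exists_conj_fromBlocks_of_isIdempotentElem {n r : ℕ}
    {g : Matrix (Fin n) (Fin n) Q} (hg : IsIdempotentElem g) (hr : g.rank = r) :
    ∃ (C : Matrix (Fin r ⊕ Fin (n - r)) (Fin n) Q) (C' : Matrix (Fin n) (Fin r ⊕ Fin (n - r)) Q),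
      C * C' = 1 ∧ C' * C = 1 ∧ C * g = fromBlocks 1 0 0 0 * C := by
  set p := toLin' g
  have hp : IsIdempotentElem p := hg.map toLinAlgEquiv'
  have hcompl := LinearMap.IsIdempotentElem.isCompl hp
  obtain ⟨_, _⟩ := Submodule.finite_free_of_isCompl_of_isLocalRing hcompl
  obtain ⟨_, _⟩ := Submodule.finite_free_of_isCompl_of_isLocalRing hcompl.symm
  have hrange : finrank Q (LinearMap.range p) = r := hr
  have hker : finrank Q (LinearMap.ker p) = n - r := by
    have := (Submodule.prodEquivOfIsCompl _ _ hcompl).finrank_eq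
    rw [finrank_prod, finrank_fin_fun] at this
    omega
  let B := ((finBasisOfFinrankEq Q _ hrange).prod (finBasisOfFinrankEq Q _ hker)).map
    (Submodule.prodEquivOfIsCompl _ _ hcompl)
  have hB : LinearMap.toMatrix B B p = fromBlocks 1 0 0 0 := by
    rw [LinearMap.toMatrix_map_left, LinearMap.toMatrix_map_right,
      LinearMap.IsIdempotentElem.conj_prodEquivOfIsCompl hp, LinearMap.toMatrix_prodMap,
      LinearMap.toMatrix_id, map_zero]
  set C := B.toMatrix (Pi.basisFun Q (Fin n))
  set C' := (Pi.basisFun Q (Fin n)).toMatrix B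
  have hconj : C * g * C' = fromBlocks 1 0 0 0 := by
    rw [← hB, ← basis_toMatrix_mul_linearMap_toMatrix_mul_basis_toMatrix
      (b' := Pi.basisFun Q (Fin n)) (c' := Pi.basisFun Q (Fin n)),
      LinearMap.toMatrix_eq_toMatrix', LinearMap.toMatrix'_toLin']
  have hC'C : C' * C = 1 := Basis.toMatrix_mul_toMatrix_flip _ _
  refine ⟨C, C', Basis.toMatrix_mul_toMatrix_flip _ _, hC'C, ?_⟩
  have : C * g = C * g * C' * C := by rw [Matrix.mul_assoc (C * g), hC'C, Matrix.mul_one]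
  rwa [hconj] at this

end LocalRing

theorem ZMod.eq_of_forall_le_apply_sub_one {d : ℕ} [NeZero d] {α : Type*} [PartialOrder α]
    {t : ZMod d → α} (h : ∀ k, t k ≤ t (k - 1)) (k l : ZMod d) : t k = t l := by
  have descend (a : ZMod d) (j : ℕ) : t a ≤ t (a - j) := by
    induction j with
    | zero => simp
    | succ j ih => exact ih.trans (by simpa [sub_sub] using h (a - j))
  have key (a b : ZMod d) : t a ≤ t b := by simpa using descend a (a - b).val
  exact le_antisymm (key k l) (key l k)

section Matrix

variable {Q : Type*} [CommRing Q] {ι κ : Type*} [Fintype ι] [DecidableEq ι]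

theorem Matrix.rank_le_rank_of_mul_eq_mul [Nontrivial Q] {a b φ : Matrix ι ι Q}
    (hφ : φ.det ∈ nonZeroDivisors Q) (h : a * φ = φ * b) : b.rank ≤ a.rank :=
  calc b.rank = (φ * b).rank := (rank_mul_eq_right_of_det_mem_nonZeroDivisors φ b hφ).symm
    _ = (a * φ).rank := by rw [h]
    _ ≤ a.rank := rank_mul_le_left a φ

theorem Matrix.commute_mul_mul_of_intertwine [Fintype κ] [DecidableEq κ]
    {C₀ C₁ : Matrix κ ι Q} {C₁' : Matrix ι κ Q} {E : Matrix κ κ Q} {a b φ : Matrix ι ι Q}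
    (h₁ : C₁ * C₁' = 1) (h₁' : C₁' * C₁ = 1) (ha : C₀ * a = E * C₀) (hb : C₁ * b = E * C₁)
    (hφ : a * φ = φ * b) :
    C₀ * φ * C₁' * E = E * (C₀ * φ * C₁') := by
  have hb' : b * C₁' = C₁' * E := by
    calc b * C₁' = C₁' * (C₁ * b) * C₁' := by rw [← Matrix.mul_assoc, h₁', Matrix.one_mul]
      _ = C₁' * E := by rw [hb, Matrix.mul_assoc, Matrix.mul_assoc, h₁, Matrix.mul_one]
  calc C₀ * φ * C₁' * E = C₀ * (a * φ) * C₁' := by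
        rw [hφ]; simp only [Matrix.mul_assoc, hb']
    _ = E * (C₀ * φ * C₁') := by simp only [← Matrix.mul_assoc, ha]

variable {m n : Type*}

theorem Matrix.fromBlocks_toBlocks_of_commute [Fintype m] [Fintype n] [DecidableEq m]
    (M : Matrix (m ⊕ n) (m ⊕ n) Q)
    (h : M * fromBlocks (1 : Matrix m m Q) 0 0 (0 : Matrix n n Q) = fromBlocks 1 0 0 0 * M) :
    fromBlocks M.toBlocks₁₁ 0 0 M.toBlocks₂₂ = M := by
  rw [← fromBlocks_toBlocks M, fromBlocks_multiply, fromBlocks_multiply] at h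
  simp only [Matrix.mul_one, Matrix.one_mul, Matrix.mul_zero, Matrix.zero_mul,
    add_zero, fromBlocks_inj] at h
  conv_rhs => rw [← fromBlocks_toBlocks M]
  rw [h.2.1, ← h.2.2.1]

end Matrix

namespace MF

variable {Q : Type*} [CommRing Q] {d : ℕ} {ι κ : Type*} [Fintype ι] [DecidableEq ι]
  [Fintype κ] [DecidableEq κ]

theorem exists_cycProd_eq_mul [NeZero d] (φ : ZMod d → Matrix ι ι Q) (k : ZMod d) :
    ∃ M, cycProd φ k = φ k * M := by
  obtain ⟨m, rfl⟩ := Nat.exists_eq_succ_of_ne_zero (NeZero.ne d)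
  rw [cycProd, List.ofFn_succ, List.prod_cons]
  simp only [Fin.val_zero, Nat.cast_zero, add_zero]
  exact ⟨_, rfl⟩

theorem IsMF.det_mem_nonZeroDivisors [NeZero d] {f : Q} {φ : ZMod d → Matrix ι ι Q}
    (hφ : IsMF d f φ) (hf : f ∈ nonZeroDivisors Q) (k : ZMod d) :
    (φ k).det ∈ nonZeroDivisors Q := by
  obtain ⟨M, hM⟩ := exists_cycProd_eq_mul φ k
  have hdet := congrArg det ((hφ k).symm.trans hM)
  rw [det_mul, det_smul, det_one, mul_one] at hdet
  exact (mul_mem_nonZeroDivisors.mp (hdet ▸ pow_mem hf _)).1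

theorem list_prod_ofFn_mul_intertwine (φ : ZMod d → Matrix ι ι Q) (ψ : ZMod d → Matrix κ κ Q)
    (α : ZMod d → Matrix κ ι Q) (h : ∀ k, α (k - 1) * φ k = ψ k * α k) (k : ZMod d) (t : ℕ) :
    α (k - 1) * (List.ofFn fun i : Fin t => φ (k + (i : ℕ))).prod =
      (List.ofFn fun i : Fin t => ψ (k + (i : ℕ))).prod * α (k - 1 + t) := by
  induction t with
  | zero => simp
  | succ t ih =>
    simp only [List.ofFn_succ', List.concat_eq_append, List.prod_append, List.prod_singleton,
      Fin.val_castSucc, Fin.val_last]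
    have step := h (k + t)
    rw [show k + t - 1 = k - 1 + t by ring] at step
    rw [show k - 1 + ((t + 1 : ℕ) : ZMod d) = k + t by push_cast; ring, ← Matrix.mul_assoc, ih,
      Matrix.mul_assoc, step, Matrix.mul_assoc]

theorem cycProd_mul_intertwine (φ : ZMod d → Matrix ι ι Q) (ψ : ZMod d → Matrix κ κ Q)
    (α : ZMod d → Matrix κ ι Q) (h : ∀ k, α (k - 1) * φ k = ψ k * α k) (k : ZMod d) :
    α (k - 1) * cycProd φ k = cycProd ψ k * α (k - 1) := by
  simpa [cycProd] using list_prod_ofFn_mul_intertwine φ ψ α h k d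

theorem IsMF.of_iso {f : Q} {φ : ZMod d → Matrix ι ι Q} {ψ : ZMod d → Matrix κ κ Q}
    (hφ : IsMF d f φ) (h : Iso φ ψ) : IsMF d f ψ := by
  obtain ⟨α, β, hαβ, -, hint⟩ := h
  intro k
  calc cycProd ψ k = cycProd ψ k * α (k - 1) * β (k - 1) := by
        rw [Matrix.mul_assoc, hαβ, Matrix.mul_one]
    _ = α (k - 1) * cycProd φ k * β (k - 1) := by rw [cycProd_mul_intertwine φ ψ α hint]
    _ = f • 1 := by rw [hφ k, Matrix.mul_smul, Matrix.mul_one, Matrix.smul_mul, hαβ]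

theorem list_prod_ofFn_fromBlocks {t : ℕ} (A : Fin t → Matrix ι ι Q)
    (B : Fin t → Matrix κ κ Q) :
    (List.ofFn fun i => fromBlocks (A i) 0 0 (B i)).prod =
      fromBlocks (List.ofFn A).prod 0 0 (List.ofFn B).prod := by
  induction t with
  | zero => simp
  | succ t ih => simp [List.ofFn_succ, ih, fromBlocks_multiply]

theorem cycProd_dsum (φ : ZMod d → Matrix ι ι Q) (ψ : ZMod d → Matrix κ κ Q) (k : ZMod d) :
    cycProd (dsum φ ψ) k = fromBlocks (cycProd φ k) 0 0 (cycProd ψ k) :=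
  list_prod_ofFn_fromBlocks _ _

theorem isMF_dsum_iff {f : Q} {φ : ZMod d → Matrix ι ι Q} {ψ : ZMod d → Matrix κ κ Q} :
    IsMF d f (dsum φ ψ) ↔ IsMF d f φ ∧ IsMF d f ψ := by
  simp only [IsMF, cycProd_dsum, ← fromBlocks_one, fromBlocks_smul, smul_zero, fromBlocks_inj,
    true_and, forall_and]

end MF

theorem idempotent_normal_form_general {Q : Type*} [CommRing Q] [IsLocalRing Q]
    (d n : ℕ) (hd : 2 ≤ d) (f : Q)
    (hfnzd : f ∈ nonZeroDivisors Q)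
    (φ : ZMod d → Matrix (Fin n) (Fin n) Q) (hφ : MF.IsMF d f φ)
    (e : ZMod d → Matrix (Fin n) (Fin n) Q)
    (he : ∀ k, e k * e k = e k)
    (hmor : ∀ k : ZMod d, e (k - 1) * φ k = φ k * e k) :
    ∃ (r : ℕ) (_ : r ≤ n)
      (C : ZMod d → Matrix (Fin r ⊕ Fin (n - r)) (Fin n) Q)
      (C' : ZMod d → Matrix (Fin n) (Fin r ⊕ Fin (n - r)) Q)
      (φ' : ZMod d → Matrix (Fin r) (Fin r) Q)
      (φ'' : ZMod d → Matrix (Fin (n - r)) (Fin (n - r)) Q),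
      (∀ k, C k * C' k = 1) ∧ (∀ k, C' k * C k = 1) ∧
      (∀ k, C k * e k = Matrix.fromBlocks 1 0 0 0 * C k) ∧
      (∀ k : ZMod d, C (k - 1) * φ k = Matrix.fromBlocks (φ' k) 0 0 (φ'' k) * C k) ∧
      MF.IsMF d f φ' ∧ MF.IsMF d f φ'' ∧
      MF.Iso φ (MF.dsum φ' φ'') := by
  have : NeZero d := ⟨by omega⟩
  have hrank : ∀ k, (e k).rank = (e 0).rank := fun k =>
    ZMod.eq_of_forall_le_apply_sub_one (fun k =>
      Matrix.rank_le_rank_of_mul_eq_mul (hφ.det_mem_nonZeroDivisors hfnzd k) (hmor k)) k 0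
  choose C C' hCC' hC'C hCe using fun k =>
    Matrix.exists_conj_fromBlocks_of_isIdempotentElem (he k) (hrank k)
  set φ' := fun k => (C (k - 1) * φ k * C' k).toBlocks₁₁
  set φ'' := fun k => (C (k - 1) * φ k * C' k).toBlocks₂₂
  have hCφ : ∀ k, C (k - 1) * φ k = Matrix.fromBlocks (φ' k) 0 0 (φ'' k) * C k := fun k => by
    rw [Matrix.fromBlocks_toBlocks_of_commute _ (Matrix.commute_mul_mul_of_intertwine
      (hCC' k) (hC'C k) (hCe (k - 1)) (hCe k) (hmor k)), Matrix.mul_assoc, hC'C, Matrix.mul_one]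
  have hiso : MF.Iso φ (MF.dsum φ' φ'') := ⟨C, C', hCC', hC'C, hCφ⟩
  obtain ⟨hφ', hφ''⟩ := MF.isMF_dsum_iff.mp (hφ.of_iso hiso)
  exact ⟨_, (e 0).rank_le_width, C, C', φ', φ'', hCC', hC'C, hCe, hCφ, hφ', hφ'', hiso⟩

/-- normal form of idempotent endomorphisms of matrix factorizations over a
local ring (Lemma 2.3). -/
theorem idempotent_normal_form {Q : Type*} [CommRing Q] [IsLocalRing Q]
    (d n : ℕ) (hd : 2 ≤ d) (f : Q) (hf : f ∈ IsLocalRing.maximalIdeal Q)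
    (hfnzd : f ∈ nonZeroDivisors Q)
    (φ : ZMod d → Matrix (Fin n) (Fin n) Q) (hφ : MF.IsMF d f φ)
    (e : ZMod d → Matrix (Fin n) (Fin n) Q)
    (he : ∀ k, e k * e k = e k)
    (hmor : ∀ k : ZMod d, e (k - 1) * φ k = φ k * e k) :
    ∃ (r : ℕ) (_ : r ≤ n)
      (C : ZMod d → Matrix (Fin r ⊕ Fin (n - r)) (Fin n) Q)
      (C' : ZMod d → Matrix (Fin n) (Fin r ⊕ Fin (n - r)) Q)
      (φ' : ZMod d → Matrix (Fin r) (Fin r) Q)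
      (φ'' : ZMod d → Matrix (Fin (n - r)) (Fin (n - r)) Q),
      (∀ k, C k * C' k = 1) ∧ (∀ k, C' k * C k = 1) ∧
      (∀ k, C k * e k = Matrix.fromBlocks 1 0 0 0 * C k) ∧
      (∀ k : ZMod d, C (k - 1) * φ k = Matrix.fromBlocks (φ' k) 0 0 (φ'' k) * C k) ∧
      MF.IsMF d f φ' ∧ MF.IsMF d f φ'' ∧
      MF.Iso φ (MF.dsum φ' φ'') :=
  idempotent_normal_form_general d n hd f hfnzd φ hφ e he hmor
end

section
/- Let d ≥ 2 be an integer, ω ∈ ℂ a primitive 2d-th root of unity, and t an integer such that t + d is even. Then ∑_{j=0}^{d-1} ω^{-j² + tj} ≠ 0; in fact (∑_{j=0}^{d-1} ω^{-j² + tj})(∑_{l=0}^{d-1} ω^{l² - tl}) = d. -/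
/-!
Since `t + d` is even, `n ↦ ω ^ (n² - t n)` has period `d`, so in the product the inner sum
may be reindexed as `l = j + m`. Then `ω ^ (-j² + t j) * ω ^ ((j + m)² - t (j + m))` equals
`ω ^ (m² - t m) * ((ω²) ^ m) ^ j`, and the sum over `j` is a geometric sum in powers of the
primitive `d`-th root `ω²`, which vanishes unless `m = 0`. Only `m = 0` survives, giving `d`.
-/

open Finset

theorem Function.Periodic.sum_range_int_add {M : Type*} [AddCancelCommMonoid M] {f : ℤ → M}
    {d : ℕ} (hf : Function.Periodic f d) (a : ℤ) :
    ∑ l ∈ range d, f (a + l) = ∑ l ∈ range d, f l := by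
  have step (b : ℤ) : ∑ l ∈ range d, f (b + 1 + l) = ∑ l ∈ range d, f (b + l) := by
    have h := (sum_range_succ (fun l : ℕ => f (b + l)) d).symm.trans
      (sum_range_succ' (fun l : ℕ => f (b + l)) d)
    simp only [Nat.cast_add, Nat.cast_one, Nat.cast_zero, add_zero, hf b] at h
    simpa only [add_assoc, add_comm (1 : ℤ)] using (add_right_cancel h).symm
  induction a using Int.induction_on with
  | zero => simp
  | succ i ih => rw [step, ih]
  | pred i ih => rw [← ih, ← step, sub_add_cancel]

theorem IsPrimitiveRoot.geom_sum_pow_eq_zero {R : Type*} [CommRing R] [IsDomain R] {ζ : R}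
    {k m : ℕ} (hζ : IsPrimitiveRoot ζ k) (hm : ¬k ∣ m) : ∑ j ∈ range k, (ζ ^ m) ^ j = 0 := by
  have hne : (1 : R) - ζ ^ m ≠ 0 :=
    sub_ne_zero_of_ne fun h => hm ((hζ.pow_eq_one_iff_dvd m).1 h.symm)
  refine eq_zero_of_ne_zero_of_mul_left_eq_zero hne ?_
  rw [mul_neg_geom_sum, ← pow_mul, mul_comm, pow_mul, hζ.pow_eq_one, one_pow, sub_self]

section

variable {K : Type*} [Field K] {ω : K} {d : ℕ} {t : ℤ}

theorem periodic_zpow_sq_sub_mul (hω : ω ^ (2 * d) = 1) (ht : Even (t + d)) :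
    Function.Periodic (fun n : ℤ => ω ^ (n ^ 2 - t * n)) d := by
  obtain rfl | hd := eq_or_ne d 0
  · simp
  have hω0 : ω ≠ 0 := fun h => by simp [h, hd] at hω
  obtain ⟨c, hc⟩ := ht
  intro n
  have hexp : (n + d) ^ 2 - t * (n + d) = (n ^ 2 - t * n) + ((2 * d : ℕ) : ℤ) * (n + c - t) := by
    push_cast; linear_combination (d : ℤ) * hc
  simp only [hexp, zpow_add₀ hω0, zpow_mul, zpow_natCast, hω, one_zpow, mul_one]

theorem IsPrimitiveRoot.sum_zpow_neg_sq_add_mul_mul_sum_zpow_sq_sub_mul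
    (hω : IsPrimitiveRoot ω (2 * d)) (ht : Even (t + d)) :
    (∑ j ∈ range d, ω ^ (-(j : ℤ) ^ 2 + t * j)) *
      (∑ l ∈ range d, ω ^ ((l : ℤ) ^ 2 - t * l)) = d := by
  obtain rfl | hd := eq_or_ne d 0
  · simp
  have hω0 : ω ≠ 0 := hω.ne_zero (by omega)
  have hω2 : IsPrimitiveRoot (ω ^ 2) d := hω.pow (by omega) rfl
  have hshift (j m : ℕ) : ω ^ (-(j : ℤ) ^ 2 + t * j) * ω ^ ((j + m : ℤ) ^ 2 - t * (j + m)) =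
      ω ^ ((m : ℤ) ^ 2 - t * m) * ((ω ^ 2) ^ m) ^ j := by
    rw [← zpow_add₀ hω0, ← pow_mul, ← pow_mul, ← zpow_natCast, ← zpow_add₀ hω0]
    push_cast; ring_nf
  calc (∑ j ∈ range d, ω ^ (-(j : ℤ) ^ 2 + t * j)) *
        (∑ l ∈ range d, ω ^ ((l : ℤ) ^ 2 - t * l))
      = ∑ j ∈ range d, ∑ m ∈ range d, ω ^ ((m : ℤ) ^ 2 - t * m) * ((ω ^ 2) ^ m) ^ j := by
        rw [sum_mul]
        refine sum_congr rfl fun j _ => ?_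
        rw [← (periodic_zpow_sq_sub_mul hω.pow_eq_one ht).sum_range_int_add j, mul_sum]
        exact sum_congr rfl fun m _ => hshift j m
    _ = ∑ m ∈ range d, ω ^ ((m : ℤ) ^ 2 - t * m) * ∑ j ∈ range d, ((ω ^ 2) ^ m) ^ j := by
        rw [sum_comm]; simp only [mul_sum]
    _ = d := by
        rw [sum_eq_single 0 (fun m hm hm0 => ?_) (by simp [Nat.pos_of_ne_zero hd])]
        · simp
        · rw [hω2.geom_sum_pow_eq_zero fun h => hm0 ?_, mul_zero]
          exact Nat.eq_zero_of_dvd_of_lt h (mem_range.1 hm)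

end

/-- for a primitive `2d`-th root of unity `ω ∈ ℂ` and an integer `t` with
`t + d` even, the Gauss-type sum `∑_{j=0}^{d-1} ω^{-j² + tj}` is nonzero; in fact its product
with `∑_{l=0}^{d-1} ω^{l² - tl}` equals `d`. -/
theorem roots_of_unity_sum_ne_zero (d : ℕ) (hd : 2 ≤ d) (ω : ℂ)
    (hω : IsPrimitiveRoot ω (2 * d)) (t : ℤ) (ht : Even (t + d)) :
    (∑ j ∈ Finset.range d, ω ^ (-(j : ℤ) ^ 2 + t * j)) *
        (∑ l ∈ Finset.range d, ω ^ ((l : ℤ) ^ 2 - t * l)) = d ∧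
      (∑ j ∈ Finset.range d, ω ^ (-(j : ℤ) ^ 2 + t * j)) ≠ 0 := by
  have hprod := hω.sum_zpow_neg_sq_add_mul_mul_sum_zpow_sq_sub_mul ht
  refine ⟨hprod, fun h0 => ?_⟩
  rw [h0, zero_mul, eq_comm, Nat.cast_eq_zero] at hprod
  omega
end

section
/- Let Q be a commutative ring, d ≥ 2 an integer with d·1 invertible in Q, and ω ∈ Q a unit such that ω^d = −1 and ∑_{j=0}^{d-1} ω^{2sj} = 0 for every integer 1 ≤ s ≤ d−1 (these conditions hold when Q is a ℤ[ω, 1/d]-algebra for a primitive 2d-th root of unity ω). Let A and B be commuting n×n matrices over Q, and let Φ be the dn×dn block matrix with (i,i)-block ω^{2(i-1)}B for i = 1,…,d, (i,i+1)-block A for i = 1,…,d−1, (d,1)-block A, and all other blocks zero. Then for each k ∈ ℤ/d there exists an invertible dn×dn matrix α_k over Q such that for every k ∈ ℤ/d, α_{k-1} Φ α_k^{-1} equals the block-diagonal matrix whose i-th diagonal block (i = 1,…,d) is A − ω^{2k+2i-3}B. -/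
open Matrix Polynomial
open scoped Kronecker

/-!
Take `α k = C k ⊗ 1` with a scalar `d × d` matrix `C k`. Writing the block matrix as
`D ⊗ B + S ⊗ A`, with `D = diag (ω ^ (2 i))` and `S` the cyclic shift, and the target as
`1 ⊗ A - E k ⊗ B` with `E k = diag (ω ^ (2 k + 2 i - 1))`, the theorem reduces to `C (k - 1) * S = C k` and
`C (k - 1) * D = -(E k * C k)`. The first forces `C k i j = c i (j - k)`, the second turns into a
first-order recurrence for `c i`, whose solution `ω ^ (2 i x + x (d - x))` is `d`-periodic in
`x` because `ω ^ d = -1`. Up to invertible diagonal factors, `C k` is the Vandermonde matrix of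
the `d`-th roots of unity `ω ^ (2 i)`, which is invertible since `1 / d ∈ Q` and the power sums
of a nontrivial power of `ω ^ 2` vanish.
-/

open Finset

section RootsOfUnity

variable {Q : Type*} [CommRing Q] {d : ℕ} {ζ : Qˣ}

theorem sum_pow_zpow_eq_zero (hζ : ζ ^ d = 1)
    (hsum : ∀ s : ℕ, 1 ≤ s → s ≤ d - 1 → ∑ j ∈ range d, ((ζ : Q) ^ s) ^ j = 0)
    {t : ℤ} (ht : ¬ (d : ℤ) ∣ t) : ∑ j ∈ range d, ((ζ ^ t : Qˣ) : Q) ^ j = 0 := by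
  rcases Nat.eq_zero_or_pos d with rfl | hd
  · simp
  obtain ⟨s, hs⟩ := Int.eq_ofNat_of_zero_le (Int.emod_nonneg t (by omega : (d : ℤ) ≠ 0))
  have hlt : t % d < d := Int.emod_lt_of_pos t (by omega)
  have hne : t % d ≠ 0 := fun h => ht (Int.dvd_of_emod_eq_zero h)
  rw [zpow_eq_zpow_emod' t hζ, hs, zpow_natCast, Units.val_pow_eq_pow_val]
  exact hsum s (by omega) (by omega)

theorem vandermonde_pow_mul_vandermonde_inv_pow_transpose (hζ : ζ ^ d = 1)
    (hsum : ∀ s : ℕ, 1 ≤ s → s ≤ d - 1 → ∑ j ∈ range d, ((ζ : Q) ^ s) ^ j = 0) :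
    vandermonde (fun i : Fin d => ((ζ ^ (i : ℕ) : Qˣ) : Q)) *
      (vandermonde fun i : Fin d => ((ζ⁻¹ ^ (i : ℕ) : Qˣ) : Q))ᵀ = (d : Q) • 1 := by
  ext i j
  have hprod : ((ζ ^ (i : ℕ) : Qˣ) : Q) * ((ζ⁻¹ ^ (j : ℕ) : Qˣ) : Q) =
      ((ζ ^ ((i : ℤ) - j) : Qˣ) : Q) := by
    rw [← Units.val_mul, inv_pow, ← zpow_natCast, ← zpow_natCast, ← _root_.zpow_neg,
      ← _root_.zpow_add, sub_eq_add_neg]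
  rw [vandermonde_mul_vandermonde_transpose, hprod,
    Fin.sum_univ_eq_sum_range (fun k => ((ζ ^ ((i : ℤ) - j) : Qˣ) : Q) ^ k)]
  by_cases hij : i = j
  · simp [hij]
  · have hdvd : ¬ (d : ℤ) ∣ (i : ℤ) - j := fun h => hij (Fin.ext (by
      have := Int.eq_zero_of_abs_lt_dvd h (abs_lt.2 ⟨by omega, by omega⟩)
      omega))
    simp [sum_pow_zpow_eq_zero hζ hsum hdvd, hij]

theorem isUnit_vandermonde_pow (hζ : ζ ^ d = 1)
    (hsum : ∀ s : ℕ, 1 ≤ s → s ≤ d - 1 → ∑ j ∈ range d, ((ζ : Q) ^ s) ^ j = 0)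
    (hdu : IsUnit (d : Q)) : IsUnit (vandermonde fun i : Fin d => ((ζ ^ (i : ℕ) : Qˣ) : Q)) :=
  .of_mul_eq_one
    ((↑hdu.unit⁻¹ : Q) • (vandermonde fun i : Fin d => ((ζ⁻¹ ^ (i : ℕ) : Qˣ) : Q))ᵀ)
    (by rw [Matrix.mul_smul, vandermonde_pow_mul_vandermonde_inv_pow_transpose hζ hsum, smul_smul,
      hdu.val_inv_mul, one_smul])

end RootsOfUnity

section Knorrer

variable {Q : Type*} [CommRing Q] {d : ℕ} {ω : Qˣ}

def knorrerExp (d : ℕ) (i x : ℤ) : ℤ := 2 * i * x + x * (d - x)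

theorem zpow_knorrerExp_periodic (hω : ω ^ d = -1) (i : ℤ) :
    Function.Periodic (fun x => ω ^ knorrerExp d i x) d := by
  intro x
  dsimp only
  have hexp : knorrerExp d i (x + d) = knorrerExp d i x + d * (2 * (i - x)) := by
    unfold knorrerExp; ring
  rw [hexp, _root_.zpow_add, _root_.zpow_mul, zpow_natCast, hω,
    Even.neg_one_zpow (even_two_mul _), mul_one]

theorem zpow_knorrerExp_congr (hω : ω ^ d = -1) (i : ℤ) {x y : ℤ}
    (h : (x : ZMod d) = y) : ω ^ knorrerExp d i x = ω ^ knorrerExp d i y := by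
  obtain ⟨t, ht⟩ := (ZMod.intCast_eq_intCast_iff_dvd_sub x y d).1 h
  rw [show y = x + t * d by linarith]
  exact ((zpow_knorrerExp_periodic hω i).int_mul t x).symm

theorem zpow_knorrerExp_add_one (hω : ω ^ d = -1) (i x : ℤ) :
    ω ^ knorrerExp d i (x + 1) = -(ω ^ (2 * (i - x) - 1) * ω ^ knorrerExp d i x) := by
  have hexp : knorrerExp d i (x + 1) = d + (2 * (i - x) - 1 + knorrerExp d i x) := by
    unfold knorrerExp; ring
  rw [hexp, _root_.zpow_add, _root_.zpow_add, zpow_natCast, hω, neg_one_mul]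

def knorrerMatrix (ω : Qˣ) (k : ZMod d) : Matrix (Fin d) (Fin d) Q :=
  of fun i j => ((ω ^ knorrerExp d (i : ℕ) ((j : ℕ) - (k.val : ℤ)) : Qˣ) : Q)

theorem knorrerMatrix_eq_diagonal_mul_vandermonde_mul_diagonal (k : ZMod d) :
    knorrerMatrix ω k =
      diagonal (fun i : Fin d => ((ω ^ (-2 * (i : ℕ) * (k.val : ℤ)) : Qˣ) : Q)) *
        vandermonde (fun i : Fin d => (((ω ^ 2) ^ (i : ℕ) : Qˣ) : Q)) *
        diagonal (fun j : Fin d => ((ω ^ knorrerExp d 0 (j - k.val : ℤ) : Qˣ) : Q)) := by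
  ext i j
  simp only [knorrerMatrix, of_apply, mul_diagonal, diagonal_mul, vandermonde_apply,
    ← Units.val_pow_eq_pow_val, ← Units.val_mul, ← zpow_natCast, ← _root_.zpow_mul,
    ← _root_.zpow_add]
  congr 2
  unfold knorrerExp
  push_cast
  ring

theorem isUnit_knorrerMatrix (hω : ω ^ d = -1)
    (hsum : ∀ s : ℕ, 1 ≤ s → s ≤ d - 1 →
      ∑ j ∈ range d, (((ω ^ 2 : Qˣ) : Q) ^ s) ^ j = 0)
    (hdu : IsUnit (d : Q)) (k : ZMod d) : IsUnit (knorrerMatrix ω k) := by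
  have hω2 : (ω ^ 2) ^ d = 1 := by rw [← pow_mul, mul_comm, pow_mul, hω, neg_one_sq]
  rw [knorrerMatrix_eq_diagonal_mul_vandermonde_mul_diagonal]
  refine ((isUnit_diagonal.2 ?_).mul (isUnit_vandermonde_pow hω2 hsum hdu)).mul
    (isUnit_diagonal.2 ?_) <;>
  exact Pi.isUnit_iff.2 fun _ => Units.isUnit _

def cyclicShift (d : ℕ) : Matrix (Fin d) (Fin d) Q :=
  of fun i j => if ((j : ℕ) : ZMod d) = ((i : ℕ) : ZMod d) + 1 then 1 else 0

theorem knorrerMatrix_mul_cyclicShift [NeZero d] (hω : ω ^ d = -1) (k : ZMod d) :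
    knorrerMatrix ω (k - 1) * cyclicShift d = knorrerMatrix ω k := by
  ext i j
  let l : Fin d := ⟨(((j : ℕ) : ZMod d) - 1).val, ZMod.val_lt _⟩
  have hl : ((l : ℕ) : ZMod d) = (j : ℕ) - 1 := ZMod.natCast_zmod_val _
  have hcond : ∀ m : Fin d, ((j : ℕ) : ZMod d) = (m : ℕ) + 1 ↔ m = l := by
    intro m
    rw [eq_comm, ← eq_sub_iff_add_eq, ← hl, ZMod.natCast_eq_natCast_iff', Nat.mod_eq_of_lt m.2,
      Nat.mod_eq_of_lt l.2, Fin.val_inj]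
  simp only [mul_apply, cyclicShift, of_apply, hcond, mul_ite, mul_one, mul_zero,
    Finset.sum_ite_eq', Finset.mem_univ, if_true, knorrerMatrix]
  congr 1
  apply zpow_knorrerExp_congr hω
  push_cast [hl, ZMod.natCast_val, ZMod.cast_id]
  ring

theorem knorrerMatrix_mul_diagonal [NeZero d] (hω : ω ^ d = -1) (k : ZMod d) :
    knorrerMatrix ω (k - 1) * diagonal (fun j : Fin d => (ω : Q) ^ (2 * (j : ℕ))) =
      -(diagonal (fun i : Fin d => ((ω ^ (2 * k.val + 2 * i - 1 : ℤ) : Qˣ) : Q)) *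
        knorrerMatrix ω k) := by
  ext i j
  rw [mul_diagonal, neg_apply, diagonal_mul]
  simp only [knorrerMatrix, of_apply]
  have hshift : ω ^ knorrerExp d (i : ℕ) ((j : ℕ) - ((k - 1).val : ℤ)) =
      ω ^ knorrerExp d (i : ℕ) ((j : ℕ) - (k.val : ℤ) + 1) :=
    zpow_knorrerExp_congr hω _ (by push_cast [ZMod.natCast_val, ZMod.cast_id]; ring)
  have hexp : ω ^ (2 * (i - (j - k.val)) - 1 : ℤ) * ω ^ (2 * (j : ℕ)) =
      ω ^ (2 * k.val + 2 * i - 1 : ℤ) := by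
    rw [← zpow_natCast, ← _root_.zpow_add]
    congr 1
    push_cast
    ring
  rw [hshift, zpow_knorrerExp_add_one hω, ← Units.val_pow_eq_pow_val, ← Units.val_mul, neg_mul,
    mul_right_comm, hexp, Units.val_neg, Units.val_mul]

end Knorrer

section Blocks

variable {Q : Type*} [CommRing Q]

theorem of_blocks_eq_kronecker_add_kronecker {ι κ : Type*} {f : ι → ι → Matrix κ κ Q}
    (X Y : Matrix ι ι Q) (A B : Matrix κ κ Q) (h : ∀ i j, f i j = X i j • A + Y i j • B) :
    (of fun p q : ι × κ => f p.1 q.1 p.2 q.2) = X ⊗ₖ A + Y ⊗ₖ B := by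
  ext ⟨i, a⟩ ⟨j, b⟩
  simp [h]

theorem ite_block_eq_diagonal_smul_add_cyclicShift_smul {d n : ℕ} (hd : 1 < d) (v : Fin d → Q)
    (A B : Matrix (Fin n) (Fin n) Q) (i j : Fin d) :
    (if j = i then v i • B
      else if ((j : ℕ) : ZMod d) = ((i : ℕ) : ZMod d) + 1 then A else 0) =
      diagonal v i j • B + (cyclicShift d : Matrix (Fin d) (Fin d) Q) i j • A := by
  have : Fact (1 < d) := ⟨hd⟩
  by_cases hji : j = i
  · simp [hji, cyclicShift]
  · simp [hji, Ne.symm hji, cyclicShift, apply_ite (· • A)]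

theorem ite_block_eq_one_smul_add_neg_diagonal_smul {d n : ℕ} (v : Fin d → Q)
    (A B : Matrix (Fin n) (Fin n) Q) (i j : Fin d) :
    (if j = i then A - v i • B else 0) =
      (1 : Matrix (Fin d) (Fin d) Q) i j • A + (-diagonal v) i j • B := by
  by_cases hji : j = i
  · subst hji
    simp [sub_eq_add_neg]
  · simp [hji, Ne.symm hji, one_apply]

end Blocks

/-- The `(i,j)`-blocks are indexed by `Fin d` (zero-based, so block index `i : Fin d`
corresponds to the paper's `i+1`). -/
theorem knorrer_block_diagonalization_general {Q : Type*} [CommRing Q] (d n : ℕ) (hd : 2 ≤ d)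
    (hdu : IsUnit (d : Q)) (ω : Qˣ) (hω : (ω : Q) ^ d = -1)
    (hsum : ∀ s : ℕ, 1 ≤ s → s ≤ d - 1 →
      ∑ j ∈ Finset.range d, (ω : Q) ^ (2 * s * j) = 0)
    (A B : Matrix (Fin n) (Fin n) Q) :
    ∃ α : ZMod d → Matrix (Fin d × Fin n) (Fin d × Fin n) Q,
      (∀ k, IsUnit (α k)) ∧
      ∀ k : ZMod d,
        α (k - 1) *
          (Matrix.of fun p q : Fin d × Fin n =>
            (if q.1 = p.1 then ((ω : Q) ^ (2 * (p.1 : ℕ))) • B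
              else if ((q.1 : ℕ) : ZMod d) = ((p.1 : ℕ) : ZMod d) + 1 then A
              else (0 : Matrix (Fin n) (Fin n) Q)) p.2 q.2) =
        (Matrix.of fun p q : Fin d × Fin n =>
          (if q.1 = p.1 then
              A - ((ω ^ (2 * (k.val : ℤ) + 2 * ((p.1 : ℕ) : ℤ) - 1) : Qˣ) : Q) • B
            else (0 : Matrix (Fin n) (Fin n) Q)) p.2 q.2) * α k := by
  have : NeZero d := ⟨by omega⟩
  have hωu : ω ^ d = -1 := Units.ext (by simpa using hω)
  have hsum_sq (s : ℕ) (h1 : 1 ≤ s) (h2 : s ≤ d - 1) :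
      ∑ j ∈ range d, (((ω ^ 2 : Qˣ) : Q) ^ s) ^ j = 0 := by
    simpa only [Units.val_pow_eq_pow_val, ← pow_mul] using hsum s h1 h2
  refine ⟨fun k => knorrerMatrix ω k ⊗ₖ (1 : Matrix (Fin n) (Fin n) Q),
    fun k => (isUnit_knorrerMatrix hωu hsum_sq hdu k).kronecker isUnit_one, fun k => ?_⟩
  dsimp only
  rw [of_blocks_eq_kronecker_add_kronecker _ _ B A
      (ite_block_eq_diagonal_smul_add_cyclicShift_smul hd (fun i => (ω : Q) ^ (2 * (i : ℕ)))
        A B),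
    of_blocks_eq_kronecker_add_kronecker _ _ A B (ite_block_eq_one_smul_add_neg_diagonal_smul
      (fun i => ((ω ^ (2 * (k.val : ℤ) + 2 * ((i : ℕ) : ℤ) - 1) : Qˣ) : Q)) A B)]
  simp only [add_mul, mul_add, ← mul_kronecker_mul, Matrix.one_mul, Matrix.mul_one,
    knorrerMatrix_mul_cyclicShift hωu, knorrerMatrix_mul_diagonal hωu, Matrix.neg_mul]
  abel

/-- diagonalization of the "Knörrer" block matrix built from commuting matrices
`A`, `B` (Proposition 4.2). The `(i,j)`-blocks are indexed by `Fin d` (zero-based, so block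
index `i : Fin d` corresponds to the paper's `i+1`). -/
theorem knorrer_block_diagonalization {Q : Type*} [CommRing Q] (d n : ℕ) (hd : 2 ≤ d)
    (hdu : IsUnit (d : Q)) (ω : Qˣ) (hω : (ω : Q) ^ d = -1)
    (hsum : ∀ s : ℕ, 1 ≤ s → s ≤ d - 1 →
      ∑ j ∈ Finset.range d, (ω : Q) ^ (2 * s * j) = 0)
    (A B : Matrix (Fin n) (Fin n) Q) (hAB : A * B = B * A) :
    ∃ α : ZMod d → Matrix (Fin d × Fin n) (Fin d × Fin n) Q,
      (∀ k, IsUnit (α k)) ∧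
      ∀ k : ZMod d,
        α (k - 1) *
          (Matrix.of fun p q : Fin d × Fin n =>
            (if q.1 = p.1 then ((ω : Q) ^ (2 * (p.1 : ℕ))) • B
              else if ((q.1 : ℕ) : ZMod d) = ((p.1 : ℕ) : ZMod d) + 1 then A
              else (0 : Matrix (Fin n) (Fin n) Q)) p.2 q.2) =
        (Matrix.of fun p q : Fin d × Fin n =>
          (if q.1 = p.1 then
              A - ((ω ^ (2 * (k.val : ℤ) + 2 * ((p.1 : ℕ) : ℤ) - 1) : Qˣ) : Q) • B
            else (0 : Matrix (Fin n) (Fin n) Q)) p.2 q.2) * α k :=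
  knorrer_block_diagonalization_general d n hd hdu ω hω hsum A B
end
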